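/- Let λ₁,…,λ₆ ∈ ℝ with 0 ≤ λ_i ≤ 1 and λ₁ + ⋯ + λ₆ ≤ 1, and suppose that all eight numbers λ_a + λ_b + λ_c for a ∈ {1,2}, b ∈ {3,4}, c ∈ {5,6} are integers. If λ₁ > 0, then λ₁ = 1 and λ₂ = λ₃ = λ₄ = λ₅ = λ₆ = 0. -/
import Mathlib

/-- An integer-valued real in (0,1] equals 1. -/
lemma int_eq_one_of (n : ℤ) (s : ℝ) (h : s = (n:ℝ)) (h0 : 0 < s) (h1 : s ≤ 1) : s = 1 := by
  have hn0 : (0:ℤ) < n := by exact_mod_cast h ▸ h0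
  have hn1 : n ≤ 1 := by exact_mod_cast h ▸ h1
  have : n = 1 := le_antisymm hn1 hn0
  rw [h, this]; norm_num

theorem Y3_terminality_combinatorics (l : Fin 6 → ℝ)
    (h01 : ∀ i, 0 ≤ l i ∧ l i ≤ 1)
    (hsum : l 0 + l 1 + l 2 + l 3 + l 4 + l 5 ≤ 1)
    (hint : ∀ a ∈ ({0, 1} : Set (Fin 6)), ∀ b ∈ ({2, 3} : Set (Fin 6)),
      ∀ c ∈ ({4, 5} : Set (Fin 6)), ∃ n : ℤ, l a + l b + l c = (n : ℝ))
    (hpos : 0 < l 0) :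
    l 0 = 1 ∧ l 1 = 0 ∧ l 2 = 0 ∧ l 3 = 0 ∧ l 4 = 0 ∧ l 5 = 0 := by
  have m0 : (0 : Fin 6) ∈ ({0, 1} : Set (Fin 6)) := Or.inl rfl
  have m2 : (2 : Fin 6) ∈ ({2, 3} : Set (Fin 6)) := Or.inl rfl
  have m3 : (3 : Fin 6) ∈ ({2, 3} : Set (Fin 6)) := Or.inr rfl
  have m4 : (4 : Fin 6) ∈ ({4, 5} : Set (Fin 6)) := Or.inl rfl
  have m5 : (5 : Fin 6) ∈ ({4, 5} : Set (Fin 6)) := Or.inr rfl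
  obtain ⟨h0l, h0u⟩ := h01 0
  obtain ⟨h1l, _⟩ := h01 1
  obtain ⟨h2l, _⟩ := h01 2
  obtain ⟨h3l, _⟩ := h01 3
  obtain ⟨h4l, _⟩ := h01 4
  obtain ⟨h5l, _⟩ := h01 5
  obtain ⟨n024, hn024⟩ := hint 0 m0 2 m2 4 m4
  have e024 : l 0 + l 2 + l 4 = 1 :=
    int_eq_one_of n024 _ hn024 (by linarith) (by linarith)
  have e1 : l 1 = 0 := by linarith
  have e3 : l 3 = 0 := by linarith
  have e5 : l 5 = 0 := by linarith
  obtain ⟨n034, hn034⟩ := hint 0 m0 3 m3 4 m4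
  have e034 : l 0 + l 3 + l 4 = 1 :=
    int_eq_one_of n034 _ hn034 (by linarith) (by linarith)
  obtain ⟨n035, hn035⟩ := hint 0 m0 3 m3 5 m5
  have e035 : l 0 + l 3 + l 5 = 1 :=
    int_eq_one_of n035 _ hn035 (by linarith) (by linarith)
  refine ⟨by linarith, e1, by linarith, e3, by linarith, e5⟩
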